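/- Let P ∈ R^{p×r} have orthonormal columns and D = diag(d_1, ..., d_r) with d_1 ≥ d_2 ≥ ... ≥ d_r ≥ 0. If F ∈ F_r, then ⟨P D P^T, P P^T − F⟩ ≥ (d_r / 2) ‖P P^T − F‖_F². -/

import Mathlib

open MeasureTheory ProbabilityTheory Matrix Real
open scoped Classical

noncomputable section

/-- Frobenius norm of a real matrix. -/
def frob {m n : ℕ} (M : Matrix (Fin m) (Fin n) ℝ) : ℝ :=
  Real.sqrt (∑ i, ∑ j, (M i j) ^ 2)

/-- Distance between `p × r` matrices modulo right multiplication by an orthogonal matrix: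
`dist(U,V) = min_{P ∈ O(r)} ‖U P - V‖_F`. -/
def gdist {p r : ℕ} (U V : Matrix (Fin p) (Fin r) ℝ) : ℝ :=
  sInf {x : ℝ | ∃ P : Matrix (Fin r) (Fin r) ℝ, Pᵀ * P = 1 ∧ x = frob (U * P - V)}

/-- Square root of a positive semidefinite matrix (as `Matrix.PosSemidef.sqrt` was defined in
Mathlib before its removal). -/
def Matrix.PosSemidef.sqrt {n : Type*} [Fintype n] [DecidableEq n]
    {A : Matrix n n ℝ} (hA : A.PosSemidef) : Matrix n n ℝ :=
  hA.1.eigenvectorUnitary.1 * diagonal ((↑) ∘ (√·) ∘ hA.1.eigenvalues) *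
  (star hA.1.eigenvectorUnitary : Matrix n n ℝ)

/-- Centered multivariate Gaussian with covariance `S`, as the law of `S^{1/2} z` for a
standard Gaussian vector `z`. -/
def mvGaussian {m : ℕ} (S : Matrix (Fin m) (Fin m) ℝ) : Measure (Fin m → ℝ) :=
  if h : S.PosSemidef then
    (Measure.pi fun _ : Fin m => gaussianReal 0 1).map fun z => h.sqrt.mulVec z
  else 0

/-- Law of `n` i.i.d. samples from `N_m(0, S)`. -/
def iidLaw (n : ℕ) {m : ℕ} (S : Matrix (Fin m) (Fin m) ℝ) : Measure (Fin n → Fin m → ℝ) :=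
  Measure.pi fun _ : Fin n => mvGaussian S

def sampleMean {n m : ℕ} (X : Fin n → Fin m → ℝ) (i : Fin m) : ℝ := (∑ t, X t i) / n

/-- Sample covariance matrix. -/
def sampleCov {n m : ℕ} (X : Fin n → Fin m → ℝ) : Matrix (Fin m) (Fin m) ℝ :=
  Matrix.of fun i j => (∑ t, (X t i - sampleMean X i) * (X t j - sampleMean X j)) / n

/-- Block-diagonal part of a matrix with respect to block labels `β`. -/
def blockPart {m k : ℕ} (β : Fin m → Fin k) (M : Matrix (Fin m) (Fin m) ℝ) :
    Matrix (Fin m) (Fin m) ℝ :=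
  Matrix.of fun i j => if β i = β j then M i j else 0

/-- Rows of `M` belonging to block `i`, all other rows zeroed out. -/
def restrictRows {m k c : ℕ} (β : Fin m → Fin k) (i : Fin k) (M : Matrix (Fin m) (Fin c) ℝ) :
    Matrix (Fin m) (Fin c) ℝ :=
  Matrix.of fun a b => if β a = i then M a b else 0

/-- ℓ₂ norm of row `i` of `M`. -/
def rowNorm {m r : ℕ} (M : Matrix (Fin m) (Fin r) ℝ) (i : Fin m) : ℝ :=
  Real.sqrt (∑ j, (M i j) ^ 2)

/-- Set of indices of nonzero rows. -/
def rowSupport {m r : ℕ} (M : Matrix (Fin m) (Fin r) ℝ) : Set (Fin m) := {i | M i ≠ 0}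

/-- `W'` is the hard thresholding of `W` keeping the `k` rows of largest ℓ₂ norm
(ties broken toward smaller indices). -/
def IsHT {m r : ℕ} (W : Matrix (Fin m) (Fin r) ℝ) (k : ℕ) (W' : Matrix (Fin m) (Fin r) ℝ) : Prop :=
  ∃ C : Finset (Fin m), C.card = min k m ∧ (∀ i ∈ C, W' i = W i) ∧ (∀ i ∉ C, W' i = 0) ∧
    ∀ i ∈ C, ∀ j ∉ C, rowNorm W j < rowNorm W i ∨ (rowNorm W j = rowNorm W i ∧ i < j)

/-- Positive semidefinite square root (junk value `0` if not psd). -/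
def psqrt {r : ℕ} (M : Matrix (Fin r) (Fin r) ℝ) : Matrix (Fin r) (Fin r) ℝ :=
  if h : M.PosSemidef then h.sqrt else 0

/-- Inverse square root. -/
def invSqrt {r : ℕ} (M : Matrix (Fin r) (Fin r) ℝ) : Matrix (Fin r) (Fin r) ℝ := (psqrt M)⁻¹

/-- Nuclear norm `Tr √(Mᵀ M)`. -/
def nucNorm {a b : ℕ} (M : Matrix (Fin a) (Fin b) ℝ) : ℝ := (psqrt (Mᵀ * M)).trace

/-- Entrywise ℓ₁ norm. -/
def l1Norm {a b : ℕ} (M : Matrix (Fin a) (Fin b) ℝ) : ℝ := ∑ i, ∑ j, |M i j|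

/-- Entrywise sup norm. -/
def maxAbs {a b : ℕ} (M : Matrix (Fin a) (Fin b) ℝ) : ℝ := sSup {x : ℝ | ∃ i j, x = |M i j|}

/-- Membership in the Fantope `{X : 0 ⪯ X ⪯ I, Tr X = r}`. -/
def InFantope {p : ℕ} (r : ℕ) (X : Matrix (Fin p) (Fin p) ℝ) : Prop :=
  X.PosSemidef ∧ (1 - X).PosSemidef ∧ X.trace = (r : ℝ)

/-- `F` minimizes `-⟨Sh, ·⟩ + ρ ‖·‖_1` over symmetric matrices whose conjugation by
`S0h^{1/2}` lies in the Fantope. -/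
def IsFantopeMin {p : ℕ} (r : ℕ) (Sh S0h : Matrix (Fin p) (Fin p) ℝ) (ρ : ℝ)
    (F : Matrix (Fin p) (Fin p) ℝ) : Prop :=
  F.IsSymm ∧ InFantope r (psqrt S0h * F * psqrt S0h) ∧
    ∀ G : Matrix (Fin p) (Fin p) ℝ, G.IsSymm → InFantope r (psqrt S0h * G * psqrt S0h) →
      -(Shᵀ * F).trace + ρ * l1Norm F ≤ -(Shᵀ * G).trace + ρ * l1Norm G

/-- `L` maximizes `⟨Sh, L Lᵀ⟩` subject to `Lᵀ S0h L = I_r` and row support inside `I`. -/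
def IsRestrictedMax {p r : ℕ} (Sh S0h : Matrix (Fin p) (Fin p) ℝ) (I : Finset (Fin p))
    (L : Matrix (Fin p) (Fin r) ℝ) : Prop :=
  Lᵀ * S0h * L = 1 ∧ (∀ i ∉ I, L i = 0) ∧
    ∀ L' : Matrix (Fin p) (Fin r) ℝ, L'ᵀ * S0h * L' = 1 → (∀ i ∉ I, L' i = 0) →
      (Shᵀ * (L' * L'ᵀ)).trace ≤ (Shᵀ * (L * Lᵀ)).trace

/-- Kullback–Leibler divergence `∫ log (dP/dQ) dP`. -/
def klDivR {α : Type*} [MeasurableSpace α] (P Q : Measure α) : ℝ :=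
  ∫ x, Real.log (P.rnDeriv Q x).toReal ∂P

/-!
With `M = Pᵀ (I - F) P ⪰ 0` and `Pᵀ P = I`, the inner product `⟨P D Pᵀ, P Pᵀ - F⟩` equals
`Tr (D M) ≥ d_r Tr M`, as the diagonal of `M` is nonnegative. On the other side
`‖P Pᵀ - F‖_F² = Tr (P Pᵀ) - 2 Tr (Pᵀ F P) + Tr F²`, and `0 ⪯ F ⪯ I` gives `Tr F² ≤ Tr F`;
with `Tr F = r = Tr (P Pᵀ)` this bounds the squared norm by `2 Tr M`.
-/

namespace Matrix

variable {n m : Type*} [Fintype n] [Fintype m]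

lemma trace_transpose_conj_mul (P : Matrix n m ℝ) (D : Matrix m m ℝ) (X : Matrix n n ℝ) :
    ((P * D * Pᵀ)ᵀ * X).trace = (Dᵀ * (Pᵀ * X * P)).trace := by
  rw [transpose_mul, transpose_mul, transpose_transpose, Matrix.mul_assoc, Matrix.mul_assoc,
    trace_mul_comm, Matrix.mul_assoc, Matrix.mul_assoc]

lemma PosSemidef.trace_mul_nonneg {A B : Matrix n n ℝ} (hA : A.PosSemidef) (hB : B.PosSemidef) :
    0 ≤ (A * B).trace := by
  open scoped MatrixOrder in
  obtain ⟨C, rfl⟩ := CStarAlgebra.nonneg_iff_eq_star_mul_self.mp hB.nonneg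
  rw [star_eq_conjTranspose, ← Matrix.mul_assoc, trace_mul_cycle]
  exact (hA.mul_mul_conjTranspose_same C).trace_nonneg

lemma trace_mul_self_le_trace [DecidableEq n] {F : Matrix n n ℝ} (hF : F.PosSemidef)
    (hF' : (1 - F).PosSemidef) :
    (F * F).trace ≤ F.trace := by
  have h := hF.trace_mul_nonneg hF'
  rw [Matrix.mul_sub, Matrix.mul_one, trace_sub] at h
  linarith

lemma mul_trace_le_trace_diagonal_mul [DecidableEq n] {d : n → ℝ} {c : ℝ} (hc : ∀ i, c ≤ d i)
    {M : Matrix n n ℝ} (hM : M.PosSemidef) : c * M.trace ≤ (diagonal d * M).trace := by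
  rw [trace, trace, Finset.mul_sum]
  gcongr with i
  simpa only [diag_apply, diagonal_mul] using mul_le_mul_of_nonneg_right (hc i) hM.diag_nonneg

variable {P : Matrix n m ℝ}

lemma trace_mul_transpose_of_transpose_mul_eq_one [DecidableEq m] (hP : Pᵀ * P = 1) :
    (P * Pᵀ).trace = Fintype.card m := by
  rw [trace_mul_comm, hP, trace_one]

lemma transpose_mul_sub_mul_of_transpose_mul_eq_one [DecidableEq n] [DecidableEq m]
    (hP : Pᵀ * P = 1) (F : Matrix n n ℝ) :
    Pᵀ * (P * Pᵀ - F) * P = Pᵀ * (1 - F) * P := by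
  rw [Matrix.mul_sub, Matrix.mul_sub, ← Matrix.mul_assoc, hP, Matrix.one_mul, Matrix.mul_one]

end Matrix

lemma frob_sq_eq_trace {a b : ℕ} (M : Matrix (Fin a) (Fin b) ℝ) :
    frob M ^ 2 = (Mᵀ * M).trace := by
  rw [frob, Real.sq_sqrt (by positivity), Finset.sum_comm]
  simp only [trace, diag_apply, mul_apply, transpose_apply, sq]

lemma frob_sq_projection_sub_le {p r : ℕ} {P : Matrix (Fin p) (Fin r) ℝ} (hP : Pᵀ * P = 1)
    {F : Matrix (Fin p) (Fin p) ℝ} (hF1 : F.PosSemidef) (hF2 : (1 - F).PosSemidef)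
    (hF3 : F.trace = r) :
    frob (P * Pᵀ - F) ^ 2 ≤ 2 * (Pᵀ * (1 - F) * P).trace := by
  have hFt : Fᵀ = F := hF1.isHermitian
  have hPP : P * Pᵀ * (P * Pᵀ) = P * Pᵀ := by
    rw [Matrix.mul_assoc, ← Matrix.mul_assoc Pᵀ, hP, Matrix.one_mul]
  have htr := trace_mul_transpose_of_transpose_mul_eq_one hP
  have hFF := trace_mul_self_le_trace hF1 hF2
  have hcyc : (F * (P * Pᵀ)).trace = (Pᵀ * F * P).trace := by
    rw [← Matrix.mul_assoc, trace_mul_comm, Matrix.mul_assoc]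
  have hcyc' : (P * Pᵀ * F).trace = (Pᵀ * F * P).trace := by
    rw [trace_mul_comm, hcyc]
  rw [frob_sq_eq_trace, transpose_sub, transpose_mul, transpose_transpose, hFt, Matrix.sub_mul,
    Matrix.mul_sub, Matrix.mul_sub, Matrix.mul_sub, Matrix.sub_mul, Matrix.mul_one]
  simp only [trace_sub, hPP, htr, hcyc, hcyc', hP, trace_one, Fintype.card_fin] at hFF ⊢
  linarith

/-- curvature of the Fantope. -/
theorem statement15
    (p r : ℕ) (hr : 1 ≤ r)
    (P : Matrix (Fin p) (Fin r) ℝ) (hP : Pᵀ * P = 1)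
    (d : Fin r → ℝ) (hd : Antitone d) (hd0 : 0 ≤ d ⟨r - 1, by omega⟩)
    (F : Matrix (Fin p) (Fin p) ℝ)
    (hF1 : F.PosSemidef) (hF2 : (1 - F).PosSemidef) (hF3 : F.trace = (r : ℝ)) :
    d ⟨r - 1, by omega⟩ / 2 * frob (P * Pᵀ - F) ^ 2 ≤
      ((P * Matrix.diagonal d * Pᵀ)ᵀ * (P * Pᵀ - F)).trace := by
  set M := Pᵀ * (1 - F) * P
  have hM : M.PosSemidef := by simpa using hF2.conjTranspose_mul_mul_same P
  have hd_last : ∀ i, d ⟨r - 1, by omega⟩ ≤ d i := fun i => hd (Fin.mk_le_mk.mpr (by omega))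
  calc d ⟨r - 1, by omega⟩ / 2 * frob (P * Pᵀ - F) ^ 2
      ≤ d ⟨r - 1, by omega⟩ / 2 * (2 * M.trace) := by
        gcongr; exact frob_sq_projection_sub_le hP hF1 hF2 hF3
    _ = d ⟨r - 1, by omega⟩ * M.trace := by ring
    _ ≤ (diagonal d * M).trace := mul_trace_le_trace_diagonal_mul hd_last hM
    _ = ((P * diagonal d * Pᵀ)ᵀ * (P * Pᵀ - F)).trace := by
        rw [trace_transpose_conj_mul, diagonal_transpose,
          transpose_mul_sub_mul_of_transpose_mul_eq_one hP]

end
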